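/- arXiv:1706.00563 — 2 statements merged into one kernel-verified Lean document; each statement's English description precedes it below -/
import Mathlib

section
/- Let F be a countable abelian group, Λ a small category with a degree functor d : Λ → ℕᵏ satisfying the unique factorisation property (a k-graph), and ρ an action of F on Λ by degree-preserving automorphisms. Then the set Λ × F with degree map d(λ,g) = (d(λ),g), range r(λ,g) = (r(λ),0), source s(λ,g) = (s(ρ₋g(λ)),0), and composition (μ,g)(ν,h) = (μ·ρ_g(ν), g+h) (defined when s(μ) = r(ρ_g(ν))) is a category satisfying the unique factorisation property with respect to its degree map into ℕᵏ × F. -/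
/-- The raw data of a small category with degree map into `P`, presented concretely:
vertices, morphisms, range/source maps, identity morphisms, a (total) composition map
whose value is only meaningful on composable pairs, and a degree map. -/
structure PGraphData (P : Type*) where
  V : Type
  E : Type
  r : E → V
  s : E → V
  ι : V → E
  comp : E → E → E
  d : E → P

/-- The axioms making `PGraphData` a small category with a degree functor. -/
def PGraphData.IsPGraph {P : Type*} [AddCommMonoid P] (Λ : PGraphData P) : Prop :=
  (∀ v, Λ.r (Λ.ι v) = v) ∧ (∀ v, Λ.s (Λ.ι v) = v) ∧ (∀ v, Λ.d (Λ.ι v) = 0) ∧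
  (∀ f g, Λ.s f = Λ.r g →
    Λ.r (Λ.comp f g) = Λ.r f ∧ Λ.s (Λ.comp f g) = Λ.s g ∧
      Λ.d (Λ.comp f g) = Λ.d f + Λ.d g) ∧
  (∀ f, Λ.comp (Λ.ι (Λ.r f)) f = f) ∧ (∀ f, Λ.comp f (Λ.ι (Λ.s f)) = f) ∧
  (∀ f g h, Λ.s f = Λ.r g → Λ.s g = Λ.r h →
    Λ.comp (Λ.comp f g) h = Λ.comp f (Λ.comp g h))

/-- The unique factorisation property: whenever `d f = p + q` there is a unique
composable pair `(μ, ν)` with `f = μν`, `d μ = p` and `d ν = q`. -/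
def PGraphData.HasUFP {P : Type*} [AddCommMonoid P] (Λ : PGraphData P) : Prop :=
  ∀ f p q, Λ.d f = p + q →
    ∃! mn : Λ.E × Λ.E, Λ.s mn.1 = Λ.r mn.2 ∧ Λ.comp mn.1 mn.2 = f ∧
      Λ.d mn.1 = p ∧ Λ.d mn.2 = q

/-- The crossed product `Λ ×_ρ F` of a `k`-graph `Λ` by an action of an abelian group `F`:
morphisms are pairs `(λ, g)` with `d(λ,g) = (d λ, g)`, `r(λ,g) = r λ`,
`s(λ,g) = s (ρ₋g λ)`, and composition `(μ,g)(ν,h) = (μ·ρ_g(ν), g+h)`. -/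
def PGraphData.crossedProduct {k : ℕ} {F : Type} [AddCommGroup F]
    (Λ : PGraphData (Fin k → ℕ)) (ρE : F → Λ.E → Λ.E) :
    PGraphData ((Fin k → ℕ) × F) where
  V := Λ.V
  E := Λ.E × F
  r := fun p => Λ.r p.1
  s := fun p => Λ.s (ρE (-p.2) p.1)
  ι := fun v => (Λ.ι v, 0)
  comp := fun p q => (Λ.comp p.1 (ρE p.2 q.1), p.2 + q.2)
  d := fun p => (Λ.d p.1, p.2)

/-! Since `ρ_g` is a degree-preserving automorphism, `(μ, g)` and `(ν, h)` are composable in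
`Λ ×_ρ F` exactly when `μ` and `ρ_g ν` are composable in `Λ`, and their composite is then
`(μ · ρ_g ν, g + h)`; the category axioms of `Λ ×_ρ F` are those of `Λ` transported along `ρ`.
Factorisations of `(λ, a + b)` with degrees `(p, a), (q, b)` correspond bijectively to the
factorisations `λ = μν` in `Λ` with degrees `p, q`, via `((μ, a), (ρ₋ₐ ν, b)) ↦ (μ, ν)`, so
unique factorisation passes from `Λ` to `Λ ×_ρ F`. -/

namespace PGraphData

structure IsDegreePreservingAction {P : Type*} {F : Type} [AddMonoid F] (Λ : PGraphData P)
    (ρE : F → Λ.E → Λ.E) (ρV : F → Λ.V → Λ.V) : Prop where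
  zero_act : ∀ f, ρE 0 f = f
  act_act : ∀ g h f, ρE g (ρE h f) = ρE (g + h) f
  r_act : ∀ g f, Λ.r (ρE g f) = ρV g (Λ.r f)
  s_act : ∀ g f, Λ.s (ρE g f) = ρV g (Λ.s f)
  act_ι : ∀ g v, ρE g (Λ.ι v) = Λ.ι (ρV g v)
  act_comp : ∀ g f f', Λ.s f = Λ.r f' → ρE g (Λ.comp f f') = Λ.comp (ρE g f) (ρE g f')
  d_act : ∀ g f, Λ.d (ρE g f) = Λ.d f

namespace IsDegreePreservingAction

variable {P : Type*} {F : Type} {Λ : PGraphData P} {ρE : F → Λ.E → Λ.E} {ρV : F → Λ.V → Λ.V}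

theorem s_act_eq_r_act [AddMonoid F] (hρ : Λ.IsDegreePreservingAction ρE ρV) (g : F)
    {x y : Λ.E} (h : Λ.s x = Λ.r y) : Λ.s (ρE g x) = Λ.r (ρE g y) := by
  rw [hρ.s_act, hρ.r_act, h]

theorem act_neg_act [AddGroup F] (hρ : Λ.IsDegreePreservingAction ρE ρV) (g : F) (x : Λ.E) :
    ρE g (ρE (-g) x) = x := by
  rw [hρ.act_act, add_neg_cancel, hρ.zero_act]

theorem neg_act_act [AddGroup F] (hρ : Λ.IsDegreePreservingAction ρE ρV) (g : F) (x : Λ.E) :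
    ρE (-g) (ρE g x) = x := by
  rw [hρ.act_act, neg_add_cancel, hρ.zero_act]

theorem s_act_eq_r_act_iff [AddGroup F] (hρ : Λ.IsDegreePreservingAction ρE ρV) (g : F)
    (x y : Λ.E) :
    Λ.s (ρE g x) = Λ.r (ρE g y) ↔ Λ.s x = Λ.r y := by
  refine ⟨fun h => ?_, hρ.s_act_eq_r_act g⟩
  simpa only [hρ.neg_act_act] using hρ.s_act_eq_r_act (-g) h

end IsDegreePreservingAction

section CrossedProduct

variable {k : ℕ} {F : Type} [AddCommGroup F] {Λ : PGraphData (Fin k → ℕ)}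
  {ρE : F → Λ.E → Λ.E} {ρV : F → Λ.V → Λ.V}

theorem crossedProduct_s_eq_r_iff (hρ : Λ.IsDegreePreservingAction ρE ρV)
    (μ ν : Λ.E) (g h : F) :
    (Λ.crossedProduct ρE).s (μ, g) = (Λ.crossedProduct ρE).r (ν, h) ↔ Λ.s μ = Λ.r (ρE g ν) := by
  show Λ.s (ρE (-g) μ) = Λ.r ν ↔ _
  rw [← hρ.s_act_eq_r_act_iff g, hρ.act_neg_act]

theorem crossedProduct_comp_assoc (hΛ : Λ.IsPGraph) (hρ : Λ.IsDegreePreservingAction ρE ρV)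
    (a b c : Λ.E × F) (hab : (Λ.crossedProduct ρE).s a = (Λ.crossedProduct ρE).r b)
    (hbc : (Λ.crossedProduct ρE).s b = (Λ.crossedProduct ρE).r c) :
    (Λ.crossedProduct ρE).comp ((Λ.crossedProduct ρE).comp a b) c =
      (Λ.crossedProduct ρE).comp a ((Λ.crossedProduct ρE).comp b c) := by
  obtain ⟨μ, g⟩ := a
  obtain ⟨ν, h⟩ := b
  obtain ⟨ξ, l⟩ := c
  rw [crossedProduct_s_eq_r_iff hρ] at hab hbc
  obtain ⟨-, -, -, -, -, -, hassoc⟩ := hΛ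
  simp only [crossedProduct, Prod.mk.injEq, add_assoc, and_true]
  rw [hρ.act_comp g _ _ hbc, ← hassoc _ _ _ hab (hρ.s_act_eq_r_act g hbc), hρ.act_act]

theorem isPGraph_crossedProduct (hΛ : Λ.IsPGraph) (hρ : Λ.IsDegreePreservingAction ρE ρV) :
    (Λ.crossedProduct ρE).IsPGraph := by
  have hassoc := crossedProduct_comp_assoc hΛ hρ
  obtain ⟨hr_ι, hs_ι, hd_ι, hcomp, hid_left, hid_right, -⟩ := hΛ
  refine ⟨hr_ι, fun (v : Λ.V) => ?_, fun (v : Λ.V) => ?_, fun ⟨μ, g⟩ ⟨ν, h⟩ hab => ?_,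
    fun ⟨μ, g⟩ => ?_, fun ⟨μ, g⟩ => ?_, hassoc⟩
  · show Λ.s (ρE (-0) (Λ.ι v)) = v
    rw [neg_zero, hρ.zero_act, hs_ι]
  · show (Λ.d (Λ.ι v), (0 : F)) = 0
    rw [hd_ι]
    rfl
  · rw [crossedProduct_s_eq_r_iff hρ] at hab
    obtain ⟨hr, hs, hd⟩ := hcomp μ (ρE g ν) hab
    refine ⟨hr, ?_, ?_⟩
    · show Λ.s (ρE (-(g + h)) (Λ.comp μ (ρE g ν))) = Λ.s (ρE (-h) ν)
      rw [hρ.s_act, hs, ← hρ.s_act, hρ.act_act, neg_add_rev, neg_add_cancel_right]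
    · show (Λ.d (Λ.comp μ (ρE g ν)), g + h) = (Λ.d μ, g) + (Λ.d ν, h)
      rw [hd, hρ.d_act]
      rfl
  · show (Λ.comp (Λ.ι (Λ.r μ)) (ρE 0 μ), 0 + g) = (μ, g)
    rw [hρ.zero_act, hid_left, zero_add]
  · show (Λ.comp μ (ρE g (Λ.ι (Λ.s (ρE (-g) μ)))), g + 0) = (μ, g)
    rw [hρ.act_ι, ← hρ.s_act, hρ.act_neg_act, hid_right, add_zero]

theorem hasUFP_crossedProduct (hUFP : Λ.HasUFP) (hρ : Λ.IsDegreePreservingAction ρE ρV) :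
    (Λ.crossedProduct ρE).HasUFP := by
  rintro ⟨f, c⟩ ⟨p, a⟩ ⟨q, b⟩ hd
  obtain ⟨hdf, rfl⟩ : Λ.d f = p + q ∧ c = a + b := Prod.mk.inj hd
  obtain ⟨⟨μ, ν⟩, ⟨hμν, rfl, rfl, rfl⟩, huniq⟩ := hUFP f _ _ hdf
  refine ⟨((μ, a), (ρE (-a) ν, b)), ⟨?_, ?_, rfl, ?_⟩, ?_⟩
  · rwa [crossedProduct_s_eq_r_iff hρ, hρ.act_neg_act]
  · show (Λ.comp μ (ρE a (ρE (-a) ν)), a + b) = (Λ.comp μ ν, a + b)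
    rw [hρ.act_neg_act]
  · show (Λ.d (ρE (-a) ν), b) = (Λ.d ν, b)
    rw [hρ.d_act]
  · rintro ⟨⟨μ', a'⟩, ⟨ν', b'⟩⟩ ⟨hμν', hcomp', hdμ', hdν'⟩
    rw [crossedProduct_s_eq_r_iff hρ] at hμν'
    simp only [crossedProduct, Prod.mk.injEq] at hcomp' hdμ' hdν'
    obtain ⟨hdμ', rfl⟩ := hdμ'
    obtain ⟨hdν', rfl⟩ := hdν'
    obtain ⟨rfl, hν⟩ := Prod.mk.inj <|
      huniq (μ', ρE a' ν') ⟨hμν', hcomp'.1, hdμ', by rw [hρ.d_act, hdν']⟩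
    rw [← hν, hρ.neg_act_act]

end CrossedProduct

end PGraphData

theorem crossedProduct_isPGraph_hasUFP_general {k : ℕ} {F : Type} [AddCommGroup F]
    (Λ : PGraphData (Fin k → ℕ))
    (hΛ : Λ.IsPGraph) (hUFP : Λ.HasUFP)
    (ρE : F → Λ.E → Λ.E) (ρV : F → Λ.V → Λ.V)
    -- ρ is an action …
    (hρ_zero : ∀ f, ρE 0 f = f)
    (hρ_add : ∀ g h f, ρE g (ρE h f) = ρE (g + h) f)
    -- … by automorphisms of the `k`-graph …
    (hρ_r : ∀ g f, Λ.r (ρE g f) = ρV g (Λ.r f))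
    (hρ_s : ∀ g f, Λ.s (ρE g f) = ρV g (Λ.s f))
    (hρ_ι : ∀ g v, ρE g (Λ.ι v) = Λ.ι (ρV g v))
    (hρ_comp : ∀ g f f', Λ.s f = Λ.r f' →
      ρE g (Λ.comp f f') = Λ.comp (ρE g f) (ρE g f'))
    -- … which preserve the degree
    (hρ_d : ∀ g f, Λ.d (ρE g f) = Λ.d f) :
    (Λ.crossedProduct ρE).IsPGraph ∧ (Λ.crossedProduct ρE).HasUFP := by
  have hρ : Λ.IsDegreePreservingAction ρE ρV :=
    ⟨hρ_zero, hρ_add, hρ_r, hρ_s, hρ_ι, hρ_comp, hρ_d⟩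
  exact ⟨Λ.isPGraph_crossedProduct hΛ hρ, Λ.hasUFP_crossedProduct hUFP hρ⟩

/-- If `F` is a countable abelian group, `Λ` a `k`-graph (a small category
with degree functor into `ℕᵏ` satisfying the unique factorisation property), and `ρ` an
action of `F` on `Λ` by degree-preserving automorphisms, then the crossed product
`Λ ×_ρ F` is a category satisfying the unique factorisation property with respect to its
degree map into `ℕᵏ × F`. -/
theorem crossedProduct_isPGraph_hasUFP {k : ℕ} {F : Type} [AddCommGroup F] [Countable F]
    (Λ : PGraphData (Fin k → ℕ)) [Countable Λ.E] [Countable Λ.V]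
    (hΛ : Λ.IsPGraph) (hUFP : Λ.HasUFP)
    (ρE : F → Λ.E → Λ.E) (ρV : F → Λ.V → Λ.V)
    -- ρ is an action …
    (hρ_zero : ∀ f, ρE 0 f = f)
    (hρ_add : ∀ g h f, ρE g (ρE h f) = ρE (g + h) f)
    -- … by automorphisms of the `k`-graph …
    (hρ_r : ∀ g f, Λ.r (ρE g f) = ρV g (Λ.r f))
    (hρ_s : ∀ g f, Λ.s (ρE g f) = ρV g (Λ.s f))
    (hρ_ι : ∀ g v, ρE g (Λ.ι v) = Λ.ι (ρV g v))
    (hρ_comp : ∀ g f f', Λ.s f = Λ.r f' →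
      ρE g (Λ.comp f f') = Λ.comp (ρE g f) (ρE g f'))
    -- … which preserve the degree
    (hρ_d : ∀ g f, Λ.d (ρE g f) = Λ.d f) :
    (Λ.crossedProduct ρE).IsPGraph ∧ (Λ.crossedProduct ρE).HasUFP :=
  crossedProduct_isPGraph_hasUFP_general Λ hΛ hUFP ρE ρV hρ_zero hρ_add hρ_r hρ_s hρ_ι hρ_comp hρ_d
end

section
/- Every F-graph, for F a countable abelian group, decomposes as a disjoint union of connected components, each isomorphic to the quotient graph F/H ×_{τ_H} F for some subgroup H ≤ F, where τ_H is the translation action of F on F/H. In particular every connected F-graph is a quotient of Ω_F by a subgroup of F. -/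
/-- Degree-zero morphisms are identities. -/
theorem PGraphData.deg_zero {F : Type} [AddCommGroup F] (Λ : PGraphData F)
    (hΛ : Λ.IsPGraph) (hUFP : Λ.HasUFP) (f : Λ.E) (hf : Λ.d f = 0) :
    f = Λ.ι (Λ.r f) := by
  obtain ⟨hrι, hsι, hdι, hcomp, hlid, hrid, hassoc⟩ := hΛ
  obtain ⟨mn, _, huniq⟩ := hUFP f 0 0 (by simpa using hf)
  have h1 : ((Λ.ι (Λ.r f), f) : Λ.E × Λ.E) = mn :=
    huniq _ ⟨hsι _, hlid f, hdι _, hf⟩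
  have h2 : ((f, Λ.ι (Λ.s f)) : Λ.E × Λ.E) = mn :=
    huniq _ ⟨(hrι _).symm, hrid f, hf, hdι _⟩
  have := h1.trans h2.symm
  exact (congrArg Prod.fst this).symm

/-- For each vertex `u` and degree `g` there is exactly one morphism with
range `u` and degree `g`. -/
theorem PGraphData.arrow_exu {F : Type} [AddCommGroup F] (Λ : PGraphData F)
    (hΛ : Λ.IsPGraph) (hUFP : Λ.HasUFP) (u : Λ.V) (g : F) :
    ∃! f : Λ.E, Λ.r f = u ∧ Λ.d f = g := by
  obtain ⟨hrι, hsι, hdι, hcomp, hlid, hrid, hassoc⟩ := hΛ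
  obtain ⟨⟨m, n⟩, ⟨hsm, hmn, hdm, hdn⟩, -⟩ :=
    hUFP (Λ.ι u) g (-g) (by rw [hdι, add_neg_cancel])
  have hrm : Λ.r m = u := by
    have := (hcomp m n hsm).1
    rw [hmn, hrι] at this; exact this.symm
  have hsn : Λ.s n = u := by
    have := (hcomp m n hsm).2.1
    rw [hmn, hsι] at this; exact this.symm
  refine ⟨m, ⟨hrm, hdm⟩, ?_⟩
  rintro f ⟨hrf, hdf⟩
  -- comp n f has degree 0, hence is an identity
  have hsnf : Λ.s n = Λ.r f := by rw [hsn, hrf]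
  have hnf := hcomp n f hsnf
  have hd0 : Λ.d (Λ.comp n f) = 0 := by
    rw [hnf.2.2, hdn, hdf, neg_add_cancel]
  have hid : Λ.comp n f = Λ.ι (Λ.r (Λ.comp n f)) :=
    PGraphData.deg_zero Λ ⟨hrι, hsι, hdι, hcomp, hlid, hrid, hassoc⟩ hUFP _ hd0
  have hrnf : Λ.r (Λ.comp n f) = Λ.r n := hnf.1
  calc f = Λ.comp (Λ.ι u) f := by rw [← hrf, hlid]
    _ = Λ.comp (Λ.comp m n) f := by rw [hmn]
    _ = Λ.comp m (Λ.comp n f) := hassoc m n f hsm hsnf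
    _ = Λ.comp m (Λ.ι (Λ.r n)) := by rw [hid, hrnf]
    _ = Λ.comp m (Λ.ι (Λ.s m)) := by rw [hsm]
    _ = m := hrid m

/-- Two vertices are connected if they lie in the same connected component: the
equivalence closure of `u ~ w` iff some morphism has range `u` and source `w`. -/
def PGraphData.Conn {P : Type*} (Λ : PGraphData P) (u w : Λ.V) : Prop :=
  Relation.EqvGen (fun a b => ∃ f, Λ.r f = a ∧ Λ.s f = b) u w

/-- Every `F`-graph (for `F` a countable abelian group) decomposes into
connected components, each isomorphic to the crossed product `F/H ×_{τ_H} F` for some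
subgroup `H ≤ F`, where `τ_H` is the translation action of `F` on `F/H`.  Concretely:
for every vertex `v` there are a subgroup `H` and bijections `φV`, `φE` from the
vertices/morphisms of the component of `v` onto `F⧸H` and `(F⧸H) × F` respectively,
preserving degree, range, source, identities, and composition, where the target graph
has `d(x,g) = g`, `r(x,g) = x`, `s(x,g) = x + ḡ`, `ι(x) = (x,0)`, and
`(x,g)(x+ḡ,h) = (x,g+h)`. -/
theorem fGraph_components_are_quotients (F : Type) [AddCommGroup F] [Countable F]
    (Λ : PGraphData F) [Countable Λ.E] [Countable Λ.V]
    (hΛ : Λ.IsPGraph) (hUFP : Λ.HasUFP) :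
    ∀ v : Λ.V, ∃ (H : AddSubgroup F)
      (φV : {u : Λ.V // Λ.Conn u v} ≃ F ⧸ H)
      (φE : {f : Λ.E // Λ.Conn (Λ.r f) v} ≃ (F ⧸ H) × F),
      -- degree preserved
      (∀ f : {f : Λ.E // Λ.Conn (Λ.r f) v}, (φE f).2 = Λ.d f.1) ∧
      -- range preserved
      (∀ (f : {f : Λ.E // Λ.Conn (Λ.r f) v}), (φE f).1 = φV ⟨Λ.r f.1, f.2⟩) ∧
      -- source preserved: s(x,g) = x + ḡ
      (∀ (f : {f : Λ.E // Λ.Conn (Λ.r f) v}) (hs : Λ.Conn (Λ.s f.1) v),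
        φV ⟨Λ.s f.1, hs⟩ = (φE f).1 + ((Λ.d f.1 : F) : F ⧸ H)) ∧
      -- identities preserved
      (∀ (u : Λ.V) (hu : Λ.Conn u v) (hι : Λ.Conn (Λ.r (Λ.ι u)) v),
        φE ⟨Λ.ι u, hι⟩ = (φV ⟨u, hu⟩, 0)) ∧
      -- composition preserved: (x,g)(x+ḡ,h) = (x,g+h)
      (∀ (f g : Λ.E) (hf : Λ.Conn (Λ.r f) v) (hg : Λ.Conn (Λ.r g) v)
        (_ : Λ.s f = Λ.r g) (hfg : Λ.Conn (Λ.r (Λ.comp f g)) v),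
        φE ⟨Λ.comp f g, hfg⟩ = ((φE ⟨f, hf⟩).1, (φE ⟨f, hf⟩).2 + (φE ⟨g, hg⟩).2)) := by
  intro v
  have hex : ∀ (u : Λ.V) (g : F), ∃ f, (Λ.r f = u ∧ Λ.d f = g) ∧
      ∀ y, Λ.r y = u ∧ Λ.d y = g → y = f := fun u g => Λ.arrow_exu hΛ hUFP u g
  choose arrow hspec huniq using hex
  have hrarrow : ∀ (u : Λ.V) (g : F), Λ.r (arrow u g) = u := fun u g => (hspec u g).1
  have hdarrow : ∀ (u : Λ.V) (g : F), Λ.d (arrow u g) = g := fun u g => (hspec u g).2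
  obtain ⟨hrι, hsι, hdι, hcomp, hlid, hrid, hassoc⟩ := hΛ
  have harr_eq : ∀ (u : Λ.V) (g : F) (f : Λ.E), Λ.r f = u → Λ.d f = g → f = arrow u g :=
    fun u g f h1 h2 => huniq u g f ⟨h1, h2⟩
  have harr0 : ∀ u, arrow u 0 = Λ.ι u :=
    fun u => (harr_eq u 0 (Λ.ι u) (hrι u) (hdι u)).symm
  have hact0 : ∀ u, Λ.s (arrow u 0) = u := fun u => by rw [harr0, hsι]
  have harr_comp : ∀ (u : Λ.V) (a b : F),
      Λ.comp (arrow u a) (arrow (Λ.s (arrow u a)) b) = arrow u (a + b) := by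
    intro u a b
    have h1 : Λ.s (arrow u a) = Λ.r (arrow (Λ.s (arrow u a)) b) := (hrarrow _ _).symm
    obtain ⟨hrc, hsc, hdc⟩ := hcomp _ _ h1
    exact harr_eq u (a + b) _ (by rw [hrc, hrarrow]) (by rw [hdc, hdarrow, hdarrow])
  have hact_add : ∀ (u : Λ.V) (a b : F),
      Λ.s (arrow u (a + b)) = Λ.s (arrow (Λ.s (arrow u a)) b) := by
    intro u a b
    have h1 : Λ.s (arrow u a) = Λ.r (arrow (Λ.s (arrow u a)) b) := (hrarrow _ _).symm
    rw [← harr_comp u a b]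
    exact (hcomp _ _ h1).2.1
  have hsymm : ∀ (u w : Λ.V) (g : F), Λ.s (arrow u g) = w → Λ.s (arrow w (-g)) = u := by
    intro u w g h
    rw [← h, ← hact_add, add_neg_cancel, hact0]
  have hEqv : ∀ u w : Λ.V, Λ.Conn u w → ∃ g, Λ.s (arrow u g) = w := by
    intro u w h
    induction h with
    | rel a b hab =>
        obtain ⟨f, h1, h2⟩ := hab
        exact ⟨Λ.d f, by rw [← harr_eq a (Λ.d f) f h1 rfl]; exact h2⟩
    | refl a => exact ⟨0, hact0 a⟩
    | symm a b _ ih => obtain ⟨g, hg⟩ := ih; exact ⟨-g, hsymm _ _ _ hg⟩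
    | trans a b c _ _ ih1 ih2 =>
        obtain ⟨g, hg⟩ := ih1; obtain ⟨g', hg'⟩ := ih2
        exact ⟨g + g', by rw [hact_add, hg, hg']⟩
  have hconn : ∀ u : Λ.V, Λ.Conn u v → ∃ g, Λ.s (arrow v g) = u := by
    intro u h
    obtain ⟨g, hg⟩ := hEqv u v h
    exact ⟨-g, hsymm _ _ _ hg⟩
  have hconn' : ∀ g : F, Λ.Conn (Λ.s (arrow v g)) v :=
    fun g => Relation.EqvGen.symm _ _
      (Relation.EqvGen.rel _ _ ⟨arrow v g, hrarrow v g, rfl⟩)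
  -- the stabilizer of `v`
  let H : AddSubgroup F :=
    { carrier := {g | Λ.s (arrow v g) = v}
      zero_mem' := hact0 v
      add_mem' := fun {a b} ha hb => by
        show Λ.s (arrow v (a + b)) = v
        rw [hact_add, ha, hb]
      neg_mem' := fun {a} ha => hsymm v v a ha }
  have hstab : ∀ (a h : F), Λ.s (arrow v h) = v →
      Λ.s (arrow (Λ.s (arrow v a)) h) = Λ.s (arrow v a) := by
    intro a h hh
    rw [← hact_add, add_comm, hact_add, hh]
  have hwd : ∀ a b : F, -a + b ∈ H → Λ.s (arrow v a) = Λ.s (arrow v b) := by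
    intro a b hab
    have : Λ.s (arrow v (a + (-a + b))) = Λ.s (arrow v a) :=
      (hact_add v a (-a + b)).trans (hstab a (-a + b) hab)
    rw [add_neg_cancel_left] at this
    exact this.symm
  let toV : F ⧸ H → {u : Λ.V // Λ.Conn u v} :=
    fun x => Quotient.liftOn' x (fun g => ⟨Λ.s (arrow v g), hconn' g⟩)
      (fun a b hab => Subtype.ext (hwd a b (QuotientAddGroup.leftRel_apply.mp hab)))
  have toV_mk : ∀ g : F, toV ↑g = ⟨Λ.s (arrow v g), hconn' g⟩ := fun g => rfl
  have hVinj : Function.Injective toV := by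
    intro x y hxy
    induction x using QuotientAddGroup.induction_on with
    | H a =>
    induction y using QuotientAddGroup.induction_on with
    | H b =>
    have hxy' : Λ.s (arrow v a) = Λ.s (arrow v b) := congrArg Subtype.val hxy
    refine (QuotientAddGroup.eq).mpr ?_
    show Λ.s (arrow v (-a + b)) = v
    rw [add_comm, hact_add, ← hxy', ← hact_add, add_neg_cancel, hact0]
  have hVsurj : Function.Surjective toV := by
    rintro ⟨u, hu⟩
    obtain ⟨g, hg⟩ := hconn u hu
    exact ⟨↑g, Subtype.ext hg⟩
  let eV : (F ⧸ H) ≃ {u : Λ.V // Λ.Conn u v} := Equiv.ofBijective toV ⟨hVinj, hVsurj⟩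
  have hconnE : ∀ p : (F ⧸ H) × F, Λ.Conn (Λ.r (arrow (toV p.1).1 p.2)) v := by
    intro p; rw [hrarrow]; exact (toV p.1).2
  let toE : (F ⧸ H) × F → {f : Λ.E // Λ.Conn (Λ.r f) v} :=
    fun p => ⟨arrow (toV p.1).1 p.2, hconnE p⟩
  have hEinj : Function.Injective toE := by
    intro p q hpq
    have h1 : arrow (toV p.1).1 p.2 = arrow (toV q.1).1 q.2 := congrArg Subtype.val hpq
    have hr1 : (toV p.1).1 = (toV q.1).1 := by
      rw [← hrarrow (toV p.1).1 p.2, ← hrarrow (toV q.1).1 q.2, h1]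
    have hd1 : p.2 = q.2 := by
      rw [← hdarrow (toV p.1).1 p.2, ← hdarrow (toV q.1).1 q.2, h1]
    have : p.1 = q.1 := hVinj (Subtype.ext hr1)
    exact Prod.ext this hd1
  have hEsurj : Function.Surjective toE := by
    rintro ⟨f, hf⟩
    refine ⟨(eV.symm ⟨Λ.r f, hf⟩, Λ.d f), Subtype.ext ?_⟩
    show arrow (toV (eV.symm ⟨Λ.r f, hf⟩)).1 (Λ.d f) = f
    have h1 : toV (eV.symm ⟨Λ.r f, hf⟩) = ⟨Λ.r f, hf⟩ := eV.apply_symm_apply _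
    rw [h1]
    exact (harr_eq (Λ.r f) (Λ.d f) f rfl rfl).symm
  let eE : ((F ⧸ H) × F) ≃ {f : Λ.E // Λ.Conn (Λ.r f) v} := Equiv.ofBijective toE ⟨hEinj, hEsurj⟩
  have key : ∀ f : {f : Λ.E // Λ.Conn (Λ.r f) v},
      f.1 = arrow (toV (eE.symm f).1).1 (eE.symm f).2 := by
    intro f
    have : toE (eE.symm f) = f := eE.apply_symm_apply f
    exact (congrArg Subtype.val this).symm
  have toV_add : ∀ (x : F ⧸ H) (g : F),
      (toV (x + ↑g)).1 = Λ.s (arrow (toV x).1 g) := by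
    intro x g
    induction x using QuotientAddGroup.induction_on with
    | H a =>
    show (toV ↑(a + g)).1 = _
    show Λ.s (arrow v (a + g)) = Λ.s (arrow (Λ.s (arrow v a)) g)
    exact hact_add v a g
  refine ⟨H, eV.symm, eE.symm, ?_, ?_, ?_, ?_, ?_⟩
  · -- degree
    intro f
    rw [key f, hdarrow]
  · -- range
    intro f
    rw [Equiv.eq_symm_apply]
    refine Subtype.ext ?_
    show (toV (eE.symm f).1).1 = Λ.r f.1
    rw [key f, hrarrow]
  · -- source
    intro f hs
    rw [Equiv.symm_apply_eq]
    refine Subtype.ext ?_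
    show Λ.s f.1 = (toV ((eE.symm f).1 + ↑(Λ.d f.1))).1
    rw [toV_add]
    have hd : Λ.d f.1 = (eE.symm f).2 := by rw [key f, hdarrow]
    rw [hd]
    exact congrArg Λ.s (key f)
  · -- identities
    intro u hu hι
    rw [Equiv.symm_apply_eq]
    refine Subtype.ext ?_
    show Λ.ι u = arrow (toV (eV.symm ⟨u, hu⟩)).1 0
    have h1 : toV (eV.symm ⟨u, hu⟩) = ⟨u, hu⟩ := eV.apply_symm_apply _
    rw [h1, harr0]
  · -- composition
    intro f g hf hg hsfg hfg
    rw [Equiv.symm_apply_eq]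
    refine Subtype.ext ?_
    show Λ.comp f g =
      arrow (toV (eE.symm ⟨f, hf⟩).1).1 ((eE.symm ⟨f, hf⟩).2 + (eE.symm ⟨g, hg⟩).2)
    have keyf : f = arrow (toV (eE.symm ⟨f, hf⟩).1).1 (eE.symm ⟨f, hf⟩).2 := key ⟨f, hf⟩
    have keyg : g = arrow (toV (eE.symm ⟨g, hg⟩).1).1 (eE.symm ⟨g, hg⟩).2 := key ⟨g, hg⟩
    have hdg : Λ.d g = (eE.symm ⟨g, hg⟩).2 := by
      have := congrArg Λ.d keyg
      rwa [hdarrow] at this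
    calc Λ.comp f g
        = Λ.comp (arrow (toV (eE.symm ⟨f, hf⟩).1).1 (eE.symm ⟨f, hf⟩).2)
            (arrow (Λ.s (arrow (toV (eE.symm ⟨f, hf⟩).1).1 (eE.symm ⟨f, hf⟩).2))
              (eE.symm ⟨g, hg⟩).2) := by
          rw [← keyf]
          congr 1
          exact harr_eq _ _ g hsfg.symm hdg
      _ = arrow (toV (eE.symm ⟨f, hf⟩).1).1 ((eE.symm ⟨f, hf⟩).2 + (eE.symm ⟨g, hg⟩).2) :=
          harr_comp _ _ _
end
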